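/- Let N ≥ 2 be an integer. For real q > 0 set Q = q − q⁻¹, 𝔰(q) = Σ_{i=1}^{N} q^{−2i}, z(q) = q^{2/N} (the positive real N-th root of q²), and μ(q) = 𝔰(q)(z(q)⁻¹ − 1) + z(q)⁻¹ q⁻¹ Q. Let α, β : (0,∞) → ℂ be functions and c₀, c₁ ∈ ℂ with c₁ ≠ 0 such that, as q → 1 (q ≠ 1), Q²α(q) → c₁ and Q⁴(α(q) + 𝔰(q)β(q)) → c₀. Then, as q → 1 (q ≠ 1), z(q)² q² μ(q) (α(q) + 𝔰(q)β(q)) / (2α(q)) → (N² − 1)c₀ / (4N c₁). -/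

import Mathlib

open scoped BigOperators Topology
open Filter

/-!
Clearing denominators, `z²q²μ = Σ_{i<N} (q^{2/N-2i} - q^{4/N-2i}) + q^{2/N+2} - q^{2/N}` is a
signed sum of real powers `q^r` whose exponents satisfy `Σ ±1 = 0` and `Σ ±r = 0` (the latter
because `N · (2/N) = 2`). Expanding each `q^r` to second order at `q = 1` therefore gives
`z²q²μ ~ ½ (Σ ±r²) (q-1)² = 2(N²-1)/N · (q-1)²`, while `Q² ~ 4(q-1)²`. Hence
`z²q²μ/Q² → (N²-1)/(2N)`, and the coefficient is this quotient times
`Q⁴(α + 𝔰β) / (2Q²α) → c₀/(2c₁)`.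
-/

namespace Stmt12

/-- `Q = q − q⁻¹`, as a complex number depending on a real parameter `q`. -/
noncomputable def Qc (q : ℝ) : ℂ := (q : ℂ) - (q : ℂ)⁻¹

/-- `𝔰(q) = Σ_{i=1}^{N} q^{−2i}`. -/
noncomputable def sc (N : ℕ) (q : ℝ) : ℂ := ∑ i : Fin N, (q : ℂ) ^ (-(2 * ((i.1 : ℤ) + 1)))

/-- `z(q) = q^{2/N}`, the positive real `N`-th root of `q²`, viewed in `ℂ`. -/
noncomputable def zc (N : ℕ) (q : ℝ) : ℂ := ((q ^ ((2 : ℝ) / (N : ℝ)) : ℝ) : ℂ)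

/-- `μ(q) = 𝔰(q)(z(q)⁻¹ − 1) + z(q)⁻¹ q⁻¹ Q`. -/
noncomputable def muc (N : ℕ) (q : ℝ) : ℂ :=
  sc N q * ((zc N q)⁻¹ - 1) + (zc N q)⁻¹ * (q : ℂ)⁻¹ * Qc q

lemma tendsto_rpow_sub_one_sub_mul_div_sq (r : ℝ) :
    Tendsto (fun q : ℝ => (q ^ r - 1 - r * (q - 1)) / (q - 1) ^ 2) (𝓝[≠] 1)
      (𝓝 (r * (r - 1) / 2)) := by
  have hderiv : HasDerivAt (fun q : ℝ => q ^ (r - 1)) (r - 1) 1 := by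
    simpa using Real.hasDerivAt_rpow_const (x := 1) (p := r - 1) (Or.inl one_ne_zero)
  have hslope : Tendsto (fun q : ℝ => (r * q ^ (r - 1) - r) / (2 * (q - 1))) (𝓝[≠] 1)
      (𝓝 (r * (r - 1) / 2)) := by
    rw [show r * (r - 1) / 2 = r / 2 * (r - 1) by ring]
    refine ((hasDerivAt_iff_tendsto_slope.mp hderiv).const_mul (r / 2)).congr' ?_
    filter_upwards [self_mem_nhdsWithin] with q hq
    rw [slope_def_field, Real.one_rpow]
    field_simp [sub_ne_zero.mpr hq]
  refine HasDerivAt.lhopital_zero_nhdsNE (f' := fun q => r * q ^ (r - 1) - r)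
    (g' := fun q => 2 * (q - 1)) ?_ ?_ ?_ ?_ ?_ hslope
  · filter_upwards [nhdsWithin_le_nhds (Ioi_mem_nhds one_pos)] with q hq
    simpa using ((Real.hasDerivAt_rpow_const (Or.inl (ne_of_gt hq))).sub_const 1).fun_sub
      (((hasDerivAt_id q).sub_const 1).const_mul r)
  · exact Eventually.of_forall fun q => by
      simpa using ((hasDerivAt_id q).sub_const 1).fun_pow 2
  · filter_upwards [self_mem_nhdsWithin] with q hq
    simpa [sub_eq_zero] using hq
  · have : ContinuousAt (fun q : ℝ => q ^ r - 1 - r * (q - 1)) 1 := by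
      fun_prop (disch := norm_num)
    simpa using this.tendsto.mono_left nhdsWithin_le_nhds
  · have : Continuous (fun q : ℝ => (q - 1) ^ 2) := by fun_prop
    simpa using (this.tendsto 1).mono_left nhdsWithin_le_nhds

lemma tendsto_sum_rpow_sub_rpow_div_sq {ι : Type*} (s : Finset ι) (a b : ι → ℝ)
    (hab : ∑ i ∈ s, (a i - b i) = 0) :
    Tendsto (fun q : ℝ => (∑ i ∈ s, (q ^ a i - q ^ b i)) / (q - 1) ^ 2) (𝓝[≠] 1)
      (𝓝 ((∑ i ∈ s, (a i ^ 2 - b i ^ 2)) / 2)) := by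
  have hlim := tendsto_finsetSum s fun i _ =>
    (tendsto_rpow_sub_one_sub_mul_div_sq (a i)).sub (tendsto_rpow_sub_one_sub_mul_div_sq (b i))
  convert hlim using 2 with q
  · have : ∑ i ∈ s, ((q ^ a i - 1 - a i * (q - 1)) - (q ^ b i - 1 - b i * (q - 1)))
        = ∑ i ∈ s, (q ^ a i - q ^ b i) := by
      simp only [show ∀ i, (q ^ a i - 1 - a i * (q - 1)) - (q ^ b i - 1 - b i * (q - 1))
        = (q ^ a i - q ^ b i) - (a i - b i) * (q - 1) by intro i; ring,
        Finset.sum_sub_distrib, ← Finset.sum_mul, hab, zero_mul, sub_zero]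
    rw [← this, Finset.sum_div]
    simp only [sub_div]
  · have : ∑ i ∈ s, (a i * (a i - 1) / 2 - b i * (b i - 1) / 2)
        = (∑ i ∈ s, (a i ^ 2 - b i ^ 2)) / 2 - (∑ i ∈ s, (a i - b i)) / 2 := by
      rw [Finset.sum_div, Finset.sum_div, ← Finset.sum_sub_distrib]
      exact Finset.sum_congr rfl fun i _ => by ring
    rw [this, hab, zero_div, sub_zero]

noncomputable def posExponent (N : ℕ) : Option (Fin N) → ℝ
  | none => 2 / N + 2
  | some i => 2 / N - 2 * i

noncomputable def negExponent (N : ℕ) : Option (Fin N) → ℝ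
  | none => 2 / N
  | some i => 2 * (2 / N) - 2 * i

lemma Fin.sum_univ_val_cast_real (N : ℕ) : ∑ i : Fin N, (i : ℝ) = N * (N - 1) / 2 := by
  induction N with
  | zero => simp
  | succ n ih =>
    rw [Fin.sum_univ_castSucc]
    simp only [Fin.val_castSucc, Fin.val_last, ih]
    push_cast
    ring

lemma sum_posExponent_sub_negExponent {N : ℕ} (hN : N ≠ 0) :
    ∑ i, (posExponent N i - negExponent N i) = 0 := by
  simp only [Fintype.sum_option, posExponent, negExponent, Finset.sum_sub_distrib,
    Finset.sum_const, Finset.card_univ, Fintype.card_fin, nsmul_eq_mul]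
  field_simp
  ring

lemma sum_posExponent_sq_sub_negExponent_sq {N : ℕ} (hN : N ≠ 0) :
    ∑ i, (posExponent N i ^ 2 - negExponent N i ^ 2) = 4 * ((N : ℝ) ^ 2 - 1) / N := by
  simp only [Fintype.sum_option, posExponent, negExponent]
  rw [Finset.sum_congr rfl fun (i : Fin N) _ =>
    show (2 / N - 2 * ((i : ℕ) : ℝ)) ^ 2 - (2 * (2 / N) - 2 * ((i : ℕ) : ℝ)) ^ 2
      = -3 * (2 / N) ^ 2 + 4 * (2 / N) * i by ring]
  rw [Finset.sum_add_distrib, ← Finset.mul_sum (a := 4 * (2 / (N : ℝ))),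
    Fin.sum_univ_val_cast_real, Finset.sum_const, Finset.card_univ, Fintype.card_fin, nsmul_eq_mul]
  field_simp
  ring

lemma zc_sq_mul_sq_mul_muc (N : ℕ) {q : ℝ} (hq : 0 < q) :
    zc N q ^ 2 * (q : ℂ) ^ 2 * muc N q
      = ((∑ i, (q ^ posExponent N i - q ^ negExponent N i) : ℝ) : ℂ) := by
  set z := q ^ (2 / (N : ℝ)) with hz
  have hz2 : q ^ (2 * (2 / (N : ℝ))) = z ^ 2 := by
    rw [hz, ← Real.rpow_two, ← Real.rpow_mul hq.le, mul_comm]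
  have hpow : ∀ (c : ℝ) (i : ℕ), q ^ (c - 2 * i) = q ^ c * ((q ^ 2)⁻¹) ^ i := by
    intro c i
    rw [Real.rpow_sub hq, Real.rpow_mul hq.le, Real.rpow_natCast, Real.rpow_two, div_eq_mul_inv,
      ← inv_pow]
  have hsc : sc N q = (q ^ 2 : ℂ)⁻¹ * ∑ i : Fin N, (((q : ℂ) ^ 2)⁻¹) ^ (i : ℕ) := by
    rw [sc, Finset.mul_sum]
    refine Finset.sum_congr rfl fun i _ => ?_
    rw [← pow_succ', ← inv_pow, ← pow_mul, ← zpow_natCast, inv_zpow']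
    push_cast
    ring_nf
  simp only [Fintype.sum_option, posExponent, negExponent, hpow, Real.rpow_add hq, Real.rpow_two,
    hz2]
  rw [muc, hsc, Qc, zc, ← hz]
  push_cast
  rw [Finset.sum_sub_distrib, ← Finset.mul_sum, ← Finset.mul_sum]
  have hz0 : (z : ℂ) ≠ 0 := by exact_mod_cast (Real.rpow_pos_of_pos hq _).ne'
  have hq0 : (q : ℂ) ≠ 0 := by exact_mod_cast hq.ne'
  field_simp
  ring

lemma Qc_eq_ofReal {q : ℝ} (hq : q ≠ 0) : Qc q = (((q - 1) * (q + 1) / q : ℝ) : ℂ) := by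
  rw [Qc, ← Complex.ofReal_inv, ← Complex.ofReal_sub]
  congr 1
  field_simp
  ring

lemma Qc_ne_zero {q : ℝ} (hq : q ∈ Set.Ioi 0 \ {1}) : Qc q ≠ 0 := by
  obtain ⟨hq0, hq1⟩ := hq
  have hq0 : 0 < q := hq0
  rw [Qc_eq_ofReal hq0.ne', Complex.ofReal_ne_zero]
  exact div_ne_zero (mul_ne_zero (sub_ne_zero.mpr hq1) (by linarith)) hq0.ne'

lemma tendsto_zc_sq_mul_sq_mul_muc_div_Qc_sq {N : ℕ} (hN : N ≠ 0) :
    Tendsto (fun q : ℝ => zc N q ^ 2 * (q : ℂ) ^ 2 * muc N q / Qc q ^ 2)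
      (𝓝[Set.Ioi 0 \ {1}] 1) (𝓝 (((N : ℂ) ^ 2 - 1) / (2 * N))) := by
  have hsum := tendsto_sum_rpow_sub_rpow_div_sq Finset.univ _ _ (sum_posExponent_sub_negExponent hN)
  rw [sum_posExponent_sq_sub_negExponent_sq hN] at hsum
  have hfactor : Tendsto (fun q : ℝ => (q / (q + 1)) ^ 2) (𝓝 1) (𝓝 ((1 / (1 + 1)) ^ 2)) :=
    (tendsto_id.div (tendsto_id.add_const 1) (by norm_num)).pow 2
  have hreal := (hsum.mono_left (nhdsWithin_mono _ (Set.sdiff_subset_compl (Set.Ioi 0) _))).mul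
    (hfactor.mono_left nhdsWithin_le_nhds)
  have hcomplex := (Complex.continuous_ofReal.tendsto _).comp hreal
  convert hcomplex.congr' ?_ using 2
  · push_cast
    field_simp
    ring
  · filter_upwards [self_mem_nhdsWithin] with q hq
    obtain ⟨hq0, hq1⟩ := hq
    have hq0 : 0 < q := hq0
    have hq1 : q - 1 ≠ 0 := sub_ne_zero.mpr hq1
    rw [Function.comp_apply, zc_sq_mul_sq_mul_muc N hq0, Qc_eq_ofReal hq0.ne']
    norm_cast
    field_simp

/-- Classical limit of the coefficient of the Levi-Civita connection on `Γ_{+,z}`: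
if `Q²α(q) → c₁ ≠ 0` and `Q⁴(α(q) + 𝔰(q)β(q)) → c₀` as `q → 1` (within `(0,∞)`, `q ≠ 1`),
then `z(q)² q² μ(q)(α(q) + 𝔰(q)β(q))/(2α(q)) → (N² − 1)c₀/(4Nc₁)`. -/
theorem classical_limit_connection_coefficient (N : ℕ) (hN : 2 ≤ N)
    (α β : ℝ → ℂ) (c0 c1 : ℂ) (hc1 : c1 ≠ 0)
    (h1 : Tendsto (fun q : ℝ => (Qc q) ^ 2 * α q)
      (𝓝[Set.Ioi (0 : ℝ) \ {1}] 1) (𝓝 c1))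
    (h0 : Tendsto (fun q : ℝ => (Qc q) ^ 4 * (α q + sc N q * β q))
      (𝓝[Set.Ioi (0 : ℝ) \ {1}] 1) (𝓝 c0)) :
    Tendsto
      (fun q : ℝ =>
        (zc N q) ^ 2 * (q : ℂ) ^ 2 * muc N q * (α q + sc N q * β q) / (2 * α q))
      (𝓝[Set.Ioi (0 : ℝ) \ {1}] 1)
      (𝓝 (((N : ℂ) ^ 2 - 1) * c0 / (4 * (N : ℂ) * c1))) := by
  have hN0 : N ≠ 0 := by omega
  have hlim := (tendsto_zc_sq_mul_sq_mul_muc_div_Qc_sq hN0).mul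
    (h0.div (tendsto_const_nhds.mul h1) (mul_ne_zero two_ne_zero hc1))
  convert hlim.congr' ?_ using 2
  · field_simp
    ring
  · filter_upwards [self_mem_nhdsWithin] with q hq
    have hQ := Qc_ne_zero hq
    simp only [Pi.div_apply]
    by_cases hα : α q = 0
    · simp [hα]
    · field_simp

end Stmt12
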